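/- Let G and H be connected graphs, each with at least 2 vertices. Then the 3-rainbow index of the strong product satisfies rx_3(G ⊠ H) ≤ rx_3(G) + rx_3(H). -/

import Mathlib

open SimpleGraph

/-- An edge coloring `c` of `G` is a 3-rainbow coloring if every set of at most three
vertices is contained in a rainbow tree of `G`, formalized as a connected subgraph of `G`
on whose edge set the coloring `c` is injective. -/
def IsRainbowColoring3 {V : Type*} (G : SimpleGraph V) (c : Sym2 V → ℕ) : Prop :=
  ∀ S : Set V, S.ncard ≤ 3 →
    ∃ T : G.Subgraph, T.Connected ∧ S ⊆ T.verts ∧ Set.InjOn c T.edgeSet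

/-- The 3-rainbow index `rx₃(G)`: the minimum number of colors in a 3-rainbow coloring. -/
noncomputable def rx3 {V : Type*} (G : SimpleGraph V) : ℕ :=
  sInf {n | ∃ c : Sym2 V → ℕ, (∀ e ∈ G.edgeSet, c e < n) ∧ IsRainbowColoring3 G c}

/-- The Steiner distance of a vertex set `S` of `G`: the minimum number of edges of a
tree (connected subgraph) of `G` containing `S`. -/
noncomputable def steinerDist {V : Type*} (G : SimpleGraph V) (S : Set V) : ℕ :=
  sInf {n | ∃ T : G.Subgraph, T.Connected ∧ S ⊆ T.verts ∧ T.edgeSet.ncard = n}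

/-- The 3-Steiner diameter of `G`: the maximum Steiner distance over vertex sets of
at most 3 vertices. -/
noncomputable def sdiam3 {V : Type*} (G : SimpleGraph V) : ℕ :=
  sSup {n | ∃ S : Set V, S.ncard ≤ 3 ∧ steinerDist G S = n}

/-- The rainbow connection number `rc(G)`: the minimum number of colors in an edge coloring
of `G` such that every two vertices are joined by a path whose edges all receive
distinct colors. -/
noncomputable def rcIndex {V : Type*} (G : SimpleGraph V) : ℕ :=
  sInf {n | ∃ c : Sym2 V → ℕ, (∀ e ∈ G.edgeSet, c e < n) ∧
    ∀ u v : V, ∃ p : G.Walk u v, p.IsPath ∧ (p.edges.map c).Nodup}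

/-- The lexicographic product `G[H]` of simple graphs. -/
def lexProd {α β : Type*} (G : SimpleGraph α) (H : SimpleGraph β) :
    SimpleGraph (α × β) where
  Adj x y := G.Adj x.1 y.1 ∨ (x.1 = y.1 ∧ H.Adj x.2 y.2)
  symm := ⟨by
    rintro x y (h | ⟨h1, h2⟩)
    · exact Or.inl h.symm
    · exact Or.inr ⟨h1.symm, h2.symm⟩⟩
  loopless := ⟨by
    rintro x (h | ⟨-, h⟩)
    · exact G.irrefl h
    · exact H.irrefl h⟩

/-- The strong product `G ⊠ H` of simple graphs. -/
def strongProd {α β : Type*} (G : SimpleGraph α) (H : SimpleGraph β) :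
    SimpleGraph (α × β) where
  Adj x y := x ≠ y ∧ (x.1 = y.1 ∨ G.Adj x.1 y.1) ∧ (x.2 = y.2 ∨ H.Adj x.2 y.2)
  symm := ⟨by
    rintro x y ⟨hne, h1, h2⟩
    exact ⟨hne.symm, h1.imp Eq.symm (fun h => h.symm), h2.imp Eq.symm (fun h => h.symm)⟩⟩
  loopless := ⟨fun x h => h.1 rfl⟩

/-- The join `G ∨ H` of two simple graphs: the disjoint union of `G` and `H` together
with all edges joining a vertex of `G` to a vertex of `H`. -/
def joinGraph {α β : Type*} (G : SimpleGraph α) (H : SimpleGraph β) :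
    SimpleGraph (α ⊕ β) where
  Adj x y :=
    match x, y with
    | Sum.inl a, Sum.inl b => G.Adj a b
    | Sum.inr a, Sum.inr b => H.Adj a b
    | Sum.inl _, Sum.inr _ => True
    | Sum.inr _, Sum.inl _ => True
  symm := ⟨by
    rintro (a | a) (b | b) h
    · exact h.symm
    · trivial
    · trivial
    · exact h.symm⟩
  loopless := ⟨by
    rintro (a | a) h
    · exact G.irrefl h
    · exact H.irrefl h⟩

/-- The Cartesian product `G₁ □ G₂ □ ⋯ □ G_k` of a family of simple graphs
(the Cartesian product is associative, so this is the iterated Cartesian product). -/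
def boxProdFamily {k : ℕ} {V : Fin k → Type*} (G : ∀ i, SimpleGraph (V i)) :
    SimpleGraph (∀ i, V i) where
  Adj x y := ∃ i, (G i).Adj (x i) (y i) ∧ ∀ j, j ≠ i → x j = y j
  symm := ⟨by
    rintro x y ⟨i, hadj, heq⟩
    exact ⟨i, hadj.symm, fun j hj => (heq j hj).symm⟩⟩
  loopless := ⟨by
    rintro x ⟨i, hadj, -⟩
    exact (G i).irrefl hadj⟩


section Aux

open SimpleGraph Walk

lemma ncard_triple_le {γ : Type*} (a b c : γ) : ({a, b, c} : Set γ).ncard ≤ 3 := by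
  have h1 := Set.ncard_insert_le a ({b, c} : Set γ)
  have h2 := Set.ncard_insert_le b ({c} : Set γ)
  have h3 := Set.ncard_singleton c
  omega

lemma subset_triple {V : Type*} [Nonempty V] (S : Set V) (hS : S.Finite) (h : S.ncard ≤ 3) :
    ∃ a b c : V, S ⊆ {a, b, c} := by
  rcases S.eq_empty_or_nonempty with rfl | ⟨a, ha⟩
  · exact ⟨Classical.arbitrary V, Classical.arbitrary V, Classical.arbitrary V, by simp⟩
  have h1 : (S \ {a}).ncard + 1 = S.ncard := Set.ncard_diff_singleton_add_one ha hS
  rcases (S \ {a}).eq_empty_or_nonempty with he | ⟨b, hb⟩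
  · refine ⟨a, a, a, fun x hx => ?_⟩
    have hxa := Set.diff_eq_empty.mp he hx
    simp only [Set.mem_singleton_iff] at hxa
    simp [hxa]
  have h2 : ((S \ {a}) \ {b}).ncard + 1 = (S \ {a}).ncard :=
    Set.ncard_diff_singleton_add_one hb hS.diff
  rcases ((S \ {a}) \ {b}).eq_empty_or_nonempty with he2 | ⟨c, hc⟩
  · refine ⟨a, b, b, fun x hx => ?_⟩
    by_cases hxa : x = a
    · simp [hxa]
    have hxb := Set.diff_eq_empty.mp he2 ⟨hx, hxa⟩
    simp only [Set.mem_singleton_iff] at hxb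
    simp [hxb]
  have h3 : (((S \ {a}) \ {b}) \ {c}).ncard + 1 = ((S \ {a}) \ {b}).ncard :=
    Set.ncard_diff_singleton_add_one hc hS.diff.diff
  have he3 : (((S \ {a}) \ {b}) \ {c}) = ∅ := by
    rw [← Set.ncard_eq_zero hS.diff.diff.diff]
    omega
  refine ⟨a, b, c, fun x hx => ?_⟩
  by_cases hxa : x = a
  · simp [hxa]
  by_cases hxb : x = b
  · simp [hxb]
  by_cases hxc : x = c
  · simp [hxc]
  exact absurd (Set.eq_empty_iff_forall_notMem.mp he3 x) (by simp [hx, hxa, hxb, hxc])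

lemma exists_first_hit {V : Type*} {K : SimpleGraph V} {x y : V} (q : K.Walk x y)
    (W : Set V) (hy : y ∈ W) :
    ∃ (m : V) (r : K.Walk x m), m ∈ W ∧ ∀ v ∈ r.support, v ≠ m → v ∉ W := by
  induction q with
  | nil => exact ⟨_, Walk.nil, hy, by simp⟩
  | @cons u v w h p ih =>
    by_cases hu : u ∈ W
    · exact ⟨u, Walk.nil, hu, by simp⟩
    · obtain ⟨m, r, hm, hr⟩ := ih hy
      refine ⟨m, Walk.cons h r, hm, ?_⟩
      intro z hz hzm
      rw [Walk.support_cons, List.mem_cons] at hz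
      rcases hz with rfl | hz
      · exact hu
      · exact hr z hz hzm

lemma tripod {V : Type*} {K : SimpleGraph V} (hK : K.Connected) (b1 b2 b3 : V) :
    ∃ (m : V) (p1 : K.Walk m b1) (p2 : K.Walk m b2) (p3 : K.Walk m b3),
      (∀ e ∈ p1.edges, e ∉ p2.edges) ∧ (∀ e ∈ p1.edges, e ∉ p3.edges) ∧
      (∀ e ∈ p2.edges, e ∉ p3.edges) := by
  classical
  obtain ⟨q0⟩ := hK b1 b2
  obtain ⟨q31⟩ := hK b3 b1
  have hpath : q0.bypass.IsPath := q0.bypass_isPath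
  set q12 := q0.bypass with hq12
  obtain ⟨m, r, hm, hr⟩ := exists_first_hit q31 {v | v ∈ q12.support}
    (by simpa using q12.end_mem_support)
  have hmem : m ∈ q12.support := hm
  have hnd : q12.edges.Nodup := hpath.isTrail.edges_nodup
  have hsplit : (q12.takeUntil m hmem).edges ++ (q12.dropUntil m hmem).edges = q12.edges := by
    rw [← Walk.edges_append, Walk.take_spec]
  have hdisj12 : ∀ e ∈ (q12.takeUntil m hmem).edges, e ∉ (q12.dropUntil m hmem).edges := by
    rw [← hsplit] at hnd
    exact fun e he1 he2 => (List.nodup_append'.mp hnd).2.2 he1 he2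
  have hr' : ∀ e ∈ r.edges, e ∉ q12.edges := by
    have key : ∀ u v : V, s(u, v) ∈ r.edges → s(u, v) ∉ q12.edges := by
      intro u v her heq
      have hne : u ≠ v := (K.mem_edgeSet.mp (r.edges_subset_edgeSet her)).ne
      have hu2 : u ∈ q12.support := q12.fst_mem_support_of_mem_edges heq
      have hv2 : v ∈ q12.support := q12.snd_mem_support_of_mem_edges heq
      have hu1 : u ∈ r.support := r.fst_mem_support_of_mem_edges her
      have hv1 : v ∈ r.support := r.snd_mem_support_of_mem_edges her
      by_cases hum : u = m
      · exact hr v hv1 (fun hv => hne (by rw [hum, hv])) hv2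
      · exact hr u hu1 hum hu2
    exact fun e => Sym2.ind key e
  refine ⟨m, (q12.takeUntil m hmem).reverse, q12.dropUntil m hmem, r.reverse, ?_, ?_, ?_⟩
  · intro e he
    rw [Walk.edges_reverse, List.mem_reverse] at he
    exact hdisj12 e he
  · intro e he he'
    rw [Walk.edges_reverse, List.mem_reverse] at he he'
    exact hr' e he' (q12.edges_takeUntil_subset hmem he)
  · intro e he he'
    rw [Walk.edges_reverse, List.mem_reverse] at he'
    exact hr' e he' (q12.edges_dropUntil_subset hmem he)

lemma rx3_witness {V : Type*} [Fintype V] (G : SimpleGraph V) (hG : G.Connected) :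
    ∃ c : Sym2 V → ℕ, (∀ e ∈ G.edgeSet, c e < rx3 G) ∧ IsRainbowColoring3 G c := by
  classical
  haveI : Nonempty V := hG.nonempty
  have hne : {n | ∃ c : Sym2 V → ℕ, (∀ e ∈ G.edgeSet, c e < n) ∧
      IsRainbowColoring3 G c}.Nonempty := by
    refine ⟨Fintype.card (Sym2 V), fun e => (Fintype.equivFin (Sym2 V) e : ℕ),
      fun e _ => (Fintype.equivFin (Sym2 V) e).2, ?_⟩
    intro S hS
    refine ⟨⊤, ?_, ?_, ?_⟩
    · exact Subgraph.connected_iff'.mpr (Subgraph.topIso.connected_iff.mpr hG)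
    · simp
    · exact Function.Injective.injOn
        (fun a b h => (Fintype.equivFin (Sym2 V)).injective (Fin.val_injective h))
  exact Nat.sInf_mem hne

end Aux

/-- For connected graphs `G` and `H`, each with at least 2 vertices,
`rx₃(G ⊠ H) ≤ rx₃(G) + rx₃(H)`. -/
theorem rx3_strongProd_le {α β : Type*} [Fintype α] [Fintype β]
    (G : SimpleGraph α) (H : SimpleGraph β) (hG : G.Connected) (hH : H.Connected)
    (hα : 2 ≤ Fintype.card α) (hβ : 2 ≤ Fintype.card β) :
    rx3 (strongProd G H) ≤ rx3 G + rx3 H := by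
  classical
  obtain ⟨cG, hcGb, hcG⟩ := rx3_witness G hG
  obtain ⟨cH, hcHb, hcH⟩ := rx3_witness H hH
  haveI : Nonempty α := Fintype.card_pos_iff.mp (by omega)
  haveI : Nonempty β := Fintype.card_pos_iff.mp (by omega)
  have hsym : ∀ x y : α × β,
      (if x.1 = y.1 then rx3 G + cH s(x.2, y.2) else cG s(x.1, y.1)) =
      (if y.1 = x.1 then rx3 G + cH s(y.2, x.2) else cG s(y.1, x.1)) := by
    intro x y
    by_cases h : x.1 = y.1
    · rw [if_pos h, if_pos h.symm, Sym2.eq_swap]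
    · rw [if_neg h, if_neg (fun h' => h h'.symm), Sym2.eq_swap]
  set c : Sym2 (α × β) → ℕ := Sym2.lift
    ⟨fun x y => if x.1 = y.1 then rx3 G + cH s(x.2, y.2) else cG s(x.1, y.1), hsym⟩ with hc
  have hvert : ∀ (a : α) (u v : β), c s((a, u), (a, v)) = rx3 G + cH s(u, v) := by
    intro a u v
    rw [hc, Sym2.lift_mk]
    simp
  have hne1 : ∀ (x y : α × β), x.1 ≠ y.1 → c s(x, y) = cG s(x.1, y.1) := by
    intro x y h
    rw [hc, Sym2.lift_mk]
    simp [h]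
  have hhor : ∀ (u v : α) (b : β), u ≠ v → c s((u, b), (v, b)) = cG s(u, v) :=
    fun u v b huv => hne1 (u, b) (v, b) huv
  have hbound : ∀ e ∈ (strongProd G H).edgeSet, c e < rx3 G + rx3 H := by
    have key : ∀ x y : α × β, (strongProd G H).Adj x y → c s(x, y) < rx3 G + rx3 H := by
      rintro ⟨x1, x2⟩ ⟨y1, y2⟩ (⟨hne, h1, h2⟩ : (x1, x2) ≠ (y1, y2) ∧ (x1 = y1 ∨ G.Adj x1 y1) ∧ (x2 = y2 ∨ H.Adj x2 y2))
      by_cases h : x1 = y1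
      · subst h
        have hH2 : H.Adj x2 y2 := by
          rcases h2 with h2 | h2
          · have h2' : x2 = y2 := h2
            exact absurd (by rw [h2']) hne
          · exact h2
        have := hcHb s(x2, y2) (H.mem_edgeSet.mpr hH2)
        rw [hvert]
        omega
      · have hG2 : G.Adj x1 y1 := by
          rcases h1 with h1 | h1
          · exact absurd h1 h
          · exact h1
        have := hcGb s(x1, y1) (G.mem_edgeSet.mpr hG2)
        rw [hne1 (x1, x2) (y1, y2) h]
        show cG s(x1, y1) < rx3 G + rx3 H
        omega
    intro e
    refine Sym2.ind (fun x y he => key x y ((strongProd G H).mem_edgeSet.mp he)) e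
  have hrainbow : IsRainbowColoring3 (strongProd G H) c := by
    intro S hS
    obtain ⟨z1, z2, z3, hSsub⟩ := subset_triple S (Set.toFinite S) hS
    obtain ⟨TG, hTGc, hTGv, hTGi⟩ := hcG {z1.1, z2.1, z3.1} (ncard_triple_le z1.1 z2.1 z3.1)
    obtain ⟨TH, hTHc, hTHv, hTHi⟩ := hcH {z1.2, z2.2, z3.2} (ncard_triple_le z1.2 z2.2 z3.2)
    have hTGcoe : TG.coe.Connected := SimpleGraph.Subgraph.connected_iff'.mp hTGc
    have hTHcoe : TH.coe.Connected := SimpleGraph.Subgraph.connected_iff'.mp hTHc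
    let A1 : TG.verts := ⟨z1.1, hTGv (by simp)⟩
    let A2 : TG.verts := ⟨z2.1, hTGv (by simp)⟩
    let A3 : TG.verts := ⟨z3.1, hTGv (by simp)⟩
    let B1 : TH.verts := ⟨z1.2, hTHv (by simp)⟩
    let B2 : TH.verts := ⟨z2.2, hTHv (by simp)⟩
    let B3 : TH.verts := ⟨z3.2, hTHv (by simp)⟩
    obtain ⟨m, p1, p2, p3, d12, d13, d23⟩ := tripod hTHcoe B1 B2 B3
    obtain ⟨q2⟩ := hTGcoe A1 A2
    obtain ⟨q3⟩ := hTGcoe A1 A3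
    let fH : TG.coe →g strongProd G H :=
      ⟨fun u => (↑u, (↑m : β)), by
        intro u v huv
        have h' : G.Adj ↑u ↑v := TG.coe_adj_sub u v huv
        exact And.intro (fun hEq => h'.ne (congrArg Prod.fst hEq)) (And.intro (Or.inr h') (Or.inl rfl))⟩
    let gf : α → (TH.coe →g strongProd G H) := fun a =>
      ⟨fun v => (a, (↑v : β)), by
        intro u v huv
        have h' : H.Adj ↑u ↑v := TH.coe_adj_sub u v huv
        exact And.intro (fun hEq => h'.ne (congrArg Prod.snd hEq)) (And.intro (Or.inl rfl) (Or.inr h'))⟩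
    let T : (strongProd G H).Subgraph :=
      ((((q2.map fH).toSubgraph ⊔ (q3.map fH).toSubgraph) ⊔ (p1.map (gf z1.1)).toSubgraph) ⊔
        (p2.map (gf z2.1)).toSubgraph) ⊔ (p3.map (gf z3.1)).toSubgraph
    have hTconn : T.Connected := by
      have t1 := Subgraph.connected_sup ((q2.map fH).toSubgraph_connected).preconnected ((q3.map fH).toSubgraph_connected).preconnected
        ⟨fH A1, by
          rw [SimpleGraph.Subgraph.verts_inf]
          exact ⟨(q2.map fH).start_mem_verts_toSubgraph, (q3.map fH).start_mem_verts_toSubgraph⟩⟩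
      have t2 := Subgraph.connected_sup t1.preconnected ((p1.map (gf z1.1)).toSubgraph_connected).preconnected
        ⟨fH A1, by
          rw [SimpleGraph.Subgraph.verts_inf, SimpleGraph.Subgraph.verts_sup]
          exact ⟨Or.inl (q2.map fH).start_mem_verts_toSubgraph,
            (p1.map (gf z1.1)).start_mem_verts_toSubgraph⟩⟩
      have t3 := Subgraph.connected_sup t2.preconnected ((p2.map (gf z2.1)).toSubgraph_connected).preconnected
        ⟨fH A2, by
          rw [SimpleGraph.Subgraph.verts_inf, SimpleGraph.Subgraph.verts_sup,
            SimpleGraph.Subgraph.verts_sup]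
          exact ⟨Or.inl (Or.inl (q2.map fH).end_mem_verts_toSubgraph),
            (p2.map (gf z2.1)).start_mem_verts_toSubgraph⟩⟩
      exact Subgraph.connected_sup t3.preconnected ((p3.map (gf z3.1)).toSubgraph_connected).preconnected
        ⟨fH A3, by
          rw [SimpleGraph.Subgraph.verts_inf, SimpleGraph.Subgraph.verts_sup,
            SimpleGraph.Subgraph.verts_sup, SimpleGraph.Subgraph.verts_sup]
          exact ⟨Or.inl (Or.inl (Or.inr (q3.map fH).end_mem_verts_toSubgraph)),
            (p3.map (gf z3.1)).start_mem_verts_toSubgraph⟩⟩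
    have hSverts : S ⊆ T.verts := by
      intro s hs
      have hs3 := hSsub hs
      simp only [T, SimpleGraph.Subgraph.verts_sup, Set.mem_union]
      rcases hs3 with rfl | rfl | rfl
      · exact Or.inl (Or.inl (Or.inr ((p1.map (gf s.1)).end_mem_verts_toSubgraph)))
      · exact Or.inl (Or.inr ((p2.map (gf s.1)).end_mem_verts_toSubgraph))
      · exact Or.inr ((p3.map (gf s.1)).end_mem_verts_toSubgraph)
    refine ⟨T, hTconn, hSverts, ?_⟩
    -- representation lemmas
    have hGrep : ∀ {z : TG.verts} (q : TG.coe.Walk A1 z) (e : Sym2 (α × β)),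
        e ∈ (q.map fH).toSubgraph.edgeSet →
        ∃ u v : α, s(u, v) ∈ TG.edgeSet ∧ u ≠ v ∧ e = s((u, (↑m : β)), (v, ↑m)) := by
      intro z q e he
      rw [Walk.mem_edges_toSubgraph, Walk.edges_map, List.mem_map] at he
      obtain ⟨e0, he0, rfl⟩ := he
      revert he0
      refine Sym2.ind (fun u v he0 => ?_) e0
      have hadj : TG.coe.Adj u v := TG.coe.mem_edgeSet.mp (q.edges_subset_edgeSet he0)
      have hadjG : G.Adj ↑u ↑v := TG.coe_adj_sub u v hadj
      exact ⟨↑u, ↑v, SimpleGraph.Subgraph.mem_edgeSet.mpr hadj, hadjG.ne,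
        by rw [Sym2.map_pair_eq]; rfl⟩
    have hHrep : ∀ (a : α) {z : TH.verts} (p : TH.coe.Walk m z) (e : Sym2 (α × β)),
        e ∈ (p.map (gf a)).toSubgraph.edgeSet →
        ∃ u v : TH.verts, s(u, v) ∈ p.edges ∧ e = s((a, (↑u : β)), (a, ↑v)) := by
      intro a z p e he
      rw [Walk.mem_edges_toSubgraph, Walk.edges_map, List.mem_map] at he
      obtain ⟨e0, he0, rfl⟩ := he
      revert he0
      refine Sym2.ind (fun u v he0 => ?_) e0
      exact ⟨u, v, he0, by rw [Sym2.map_pair_eq]; rfl⟩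
    have sub1 : ∀ ee ∈ p1.edges, ee ∈ TH.coe.edgeSet := fun ee h => p1.edges_subset_edgeSet h
    have sub2 : ∀ ee ∈ p2.edges, ee ∈ TH.coe.edgeSet := fun ee h => p2.edges_subset_edgeSet h
    have sub3 : ∀ ee ∈ p3.edges, ee ∈ TH.coe.edgeSet := fun ee h => p3.edges_subset_edgeSet h
    have hmemT : ∀ e ∈ T.edgeSet,
        (∃ u v : α, s(u, v) ∈ TG.edgeSet ∧ u ≠ v ∧ e = s((u, (↑m : β)), (v, ↑m))) ∨
        (∃ u v : TH.verts, s(u, v) ∈ p1.edges ∧ e = s((z1.1, (↑u : β)), (z1.1, ↑v))) ∨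
        (∃ u v : TH.verts, s(u, v) ∈ p2.edges ∧ e = s((z2.1, (↑u : β)), (z2.1, ↑v))) ∨
        (∃ u v : TH.verts, s(u, v) ∈ p3.edges ∧ e = s((z3.1, (↑u : β)), (z3.1, ↑v))) := by
      intro e he
      simp only [T, SimpleGraph.Subgraph.edgeSet_sup, Set.mem_union] at he
      rcases he with (((h | h) | h) | h) | h
      · exact Or.inl (hGrep q2 e h)
      · exact Or.inl (hGrep q3 e h)
      · exact Or.inr (Or.inl (hHrep z1.1 p1 e h))
      · exact Or.inr (Or.inr (Or.inl (hHrep z2.1 p2 e h)))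
      · exact Or.inr (Or.inr (Or.inr (hHrep z3.1 p3 e h)))
    have hGlt : ∀ u v : α, s(u, v) ∈ TG.edgeSet → cG s(u, v) < rx3 G :=
      fun u v h => hcGb _ (TG.edgeSet_subset h)
    have GVmix : ∀ (u v a : α) (u2 v2 : TH.verts), s(u, v) ∈ TG.edgeSet → u ≠ v →
        c s((u, (↑m : β)), (v, ↑m)) = c s((a, (↑u2 : β)), (a, ↑v2)) → False := by
      intro u v a u2 v2 hTGe huv hcc
      rw [hhor u v _ huv, hvert] at hcc
      have := hGlt u v hTGe
      omega
    have VV : ∀ (a a' : α) (u v u' v' : TH.verts) (P P' : List (Sym2 TH.verts)),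
        (∀ ee ∈ P, ee ∈ TH.coe.edgeSet) → (∀ ee ∈ P', ee ∈ TH.coe.edgeSet) →
        s(u, v) ∈ P → s(u', v') ∈ P' →
        c s((a, (↑u : β)), (a, ↑v)) = c s((a', (↑u' : β)), (a', ↑v')) →
        ((a = a' ∧ P = P') ∨ (∀ ee ∈ P, ee ∉ P')) →
        s((a, (↑u : β)), (a, ↑v)) = s((a', (↑u' : β)), (a', ↑v')) := by
      intro a a' u v u' v' P P' hsubP hsubP' hmemP hmemP' hcc hcases
      rw [hvert, hvert] at hcc
      have hcHeq : cH s((↑u : β), ↑v) = cH s((↑u' : β), ↑v') := by omega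
      have hadj1 : TH.coe.Adj u v := TH.coe.mem_edgeSet.mp (hsubP _ hmemP)
      have hadj2 : TH.coe.Adj u' v' := TH.coe.mem_edgeSet.mp (hsubP' _ hmemP')
      have hmem1 : s((↑u : β), ↑v) ∈ TH.edgeSet := SimpleGraph.Subgraph.mem_edgeSet.mpr hadj1
      have hmem2 : s((↑u' : β), ↑v') ∈ TH.edgeSet := SimpleGraph.Subgraph.mem_edgeSet.mpr hadj2
      have heq2 := hTHi hmem1 hmem2 hcHeq
      have heq3 : s(u, v) = s(u', v') := by
        refine Sym2.map.injective (Subtype.val_injective) ?_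
        rw [Sym2.map_pair_eq, Sym2.map_pair_eq]
        exact heq2
      rcases hcases with ⟨rfl, rfl⟩ | hdisj
      · have h2 := congrArg (Sym2.map (fun z : TH.verts => (a, (↑z : β)))) heq3
        rwa [Sym2.map_pair_eq, Sym2.map_pair_eq] at h2
      · exact (hdisj _ (heq3 ▸ hmemP) hmemP').elim
    intro e he e' he' hcc
    rcases hmemT e he with ⟨u, v, hTGe, huv, rfl⟩ | ⟨u, v, hp, rfl⟩ | ⟨u, v, hp, rfl⟩ |
      ⟨u, v, hp, rfl⟩ <;>
      rcases hmemT e' he' with ⟨u', v', hTGe', huv', rfl⟩ | ⟨u', v', hp', rfl⟩ |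
        ⟨u', v', hp', rfl⟩ | ⟨u', v', hp', rfl⟩
    · rw [hhor u v _ huv, hhor u' v' _ huv'] at hcc
      have h1 := hTGi hTGe hTGe' hcc
      have h2 := congrArg (Sym2.map (fun x : α => (x, (↑m : β)))) h1
      rwa [Sym2.map_pair_eq, Sym2.map_pair_eq] at h2
    · exact (GVmix u v _ u' v' hTGe huv hcc).elim
    · exact (GVmix u v _ u' v' hTGe huv hcc).elim
    · exact (GVmix u v _ u' v' hTGe huv hcc).elim
    · exact ((GVmix u' v' _ u v hTGe' huv' hcc.symm).elim)
    · exact VV _ _ u v u' v' _ _ sub1 sub1 hp hp' hcc (Or.inl ⟨rfl, rfl⟩)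
    · exact VV _ _ u v u' v' _ _ sub1 sub2 hp hp' hcc (Or.inr d12)
    · exact VV _ _ u v u' v' _ _ sub1 sub3 hp hp' hcc (Or.inr d13)
    · exact ((GVmix u' v' _ u v hTGe' huv' hcc.symm).elim)
    · exact VV _ _ u v u' v' _ _ sub2 sub1 hp hp' hcc
        (Or.inr (fun ee h2 h1 => d12 ee h1 h2))
    · exact VV _ _ u v u' v' _ _ sub2 sub2 hp hp' hcc (Or.inl ⟨rfl, rfl⟩)
    · exact VV _ _ u v u' v' _ _ sub2 sub3 hp hp' hcc (Or.inr d23)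
    · exact ((GVmix u' v' _ u v hTGe' huv' hcc.symm).elim)
    · exact VV _ _ u v u' v' _ _ sub3 sub1 hp hp' hcc
        (Or.inr (fun ee h2 h1 => d13 ee h1 h2))
    · exact VV _ _ u v u' v' _ _ sub3 sub2 hp hp' hcc
        (Or.inr (fun ee h2 h1 => d23 ee h1 h2))
    · exact VV _ _ u v u' v' _ _ sub3 sub3 hp hp' hcc (Or.inl ⟨rfl, rfl⟩)
  exact Nat.sInf_le ⟨c, hbound, hrainbow⟩
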